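/- arXiv:2203.02190 — 2 statements merged into one kernel-verified Lean document; each statement's English description precedes it below -/
import Mathlib

section
/- Let β > 1 and let x, y ∈ ℝ² be distinct points. A point z ∈ ℝ² with z ∉ {x,y} lies in C_β(x,y) if and only if the angle ∠xzy of the triangle with vertices x, z, y at the vertex z is at least arcsin(1/β). -/
open Metric Set EuclideanGeometry

def Cbeta (β : ℝ) (x y : EuclideanSpace ℝ (Fin 2)) : Set (EuclideanSpace ℝ (Fin 2)) :=
  {z | ∃ M : EuclideanSpace ℝ (Fin 2),
    dist M x = β * dist x y / 2 ∧ dist M y = β * dist x y / 2 ∧ dist z M ≤ β * dist x y / 2}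

/-!
Let `d = dist x y`, `m` the midpoint of `x y` and `J` the rotation by a right angle. The circles
of radius `β d / 2` through `x` and `y` are centred at `m + s • J (y - x)` with `(2 s)² = β² - 1`.
For a centre `M` equidistant from `x` and `y`, the excess `dist z M² - dist M x²` equals
`⟪x - z, y - z⟫ - 2 ⟪z - m, M - m⟫`, and `⟪z - m, J (y - x)⟫` is the signed area
`ω (x - z) (y - z)`. Choosing the sign of `s` optimally, `z` lies in one of the two disks iff
`⟪x - z, y - z⟫ ≤ √(β² - 1) |ω (x - z) (y - z)|`, i.e. `cos θ ≤ √(β² - 1) sin θ` for `θ = ∠xzy`.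
With `α = arcsin (1 / β)` this reads `sin (θ - α) ≥ 0`, i.e. `α ≤ θ`.
-/

open Real RealInnerProductSpace AffineSubspace InnerProductGeometry Module
open scoped EuclideanSpace

theorem Real.sin_sub_nonneg_iff {θ α : ℝ} (hθ₀ : 0 ≤ θ) (hθ : θ ≤ π) (hα₀ : 0 ≤ α) (hα : α < π) :
    0 ≤ sin (θ - α) ↔ α ≤ θ := by
  refine ⟨fun h => ?_, fun h => sin_nonneg_of_nonneg_of_le_pi (by linarith) (by linarith)⟩
  by_contra! hlt
  exact (sin_neg_of_neg_of_neg_pi_lt (by linarith) (by linarith)).not_ge h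

theorem Real.cos_le_sqrt_sq_sub_one_mul_sin_iff {β θ : ℝ} (hβ : 1 ≤ β) (hθ₀ : 0 ≤ θ)
    (hθ : θ ≤ π) : cos θ ≤ √(β ^ 2 - 1) * sin θ ↔ arcsin (1 / β) ≤ θ := by
  set α := arcsin (1 / β)
  have hβ₀ : 0 < β := by linarith
  have hsin : sin α = 1 / β :=
    sin_arcsin (by rw [le_div_iff₀ hβ₀]; linarith) (by rw [div_le_one hβ₀]; linarith)
  have hcos : √(β ^ 2 - 1) = β * cos α := by
    rw [sqrt_eq_iff_mul_self_eq (by nlinarith) (mul_nonneg hβ₀.le (cos_arcsin_nonneg _)), ← sq,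
      mul_pow, cos_sq', hsin]
    field_simp
  have hsin_sub : β * sin (θ - α) = β * cos α * sin θ - cos θ := by
    rw [sin_sub, hsin]
    field_simp
  have hα : α < π := (arcsin_le_pi_div_two _).trans_lt (by linarith [pi_pos])
  rw [hcos, ← sub_nonneg, ← hsin_sub, mul_nonneg_iff_of_pos_left hβ₀]
  exact sin_sub_nonneg_iff hθ₀ hθ (arcsin_nonneg.2 (by positivity)) hα

theorem exists_sq_eq_and_le_mul_iff {k c a : ℝ} (hk : 0 ≤ k) :
    (∃ s, s ^ 2 = k ^ 2 ∧ c ≤ s * a) ↔ c ≤ k * |a| := by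
  constructor
  · rintro ⟨s, hs, hc⟩
    rw [← abs_of_nonneg hk, ← (sq_eq_sq_iff_abs_eq_abs s k).1 hs, ← abs_mul]
    exact hc.trans (le_abs_self _)
  · intro h
    rcases le_total 0 a with ha | ha
    · exact ⟨k, rfl, by rwa [abs_of_nonneg ha] at h⟩
    · exact ⟨-k, neg_sq k, by rw [abs_of_nonpos ha] at h; linarith⟩

theorem dist_sq_sub_average_dist_sq {V : Type*} [NormedAddCommGroup V] [InnerProductSpace ℝ V]
    (x y z M : V) :
    dist z M ^ 2 - (dist M x ^ 2 + dist M y ^ 2) / 2 =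
      ⟪x - z, y - z⟫ - 2 * ⟪z - midpoint ℝ x y, M - midpoint ℝ x y⟫ := by
  simp only [dist_eq_norm, ← real_inner_self_eq_norm_sq, midpoint_eq_smul_add, invOf_eq_inv,
    inner_sub_left, inner_sub_right, inner_add_left, inner_add_right, real_inner_smul_left,
    real_inner_smul_right]
  rw [real_inner_comm x y, real_inner_comm x z, real_inner_comm y z, real_inner_comm x M,
    real_inner_comm y M, real_inner_comm z M]
  ring

section TwoDim

variable {V : Type*} [NormedAddCommGroup V] [InnerProductSpace ℝ V] [Fact (finrank ℝ V = 2)]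
  (o : Orientation ℝ V (Fin 2))

local notation "ω" => o.areaForm
local notation "J" => o.rightAngleRotation

theorem Orientation.eq_smul_rightAngleRotation_of_inner_eq_zero {a u : V} (ha : a ≠ 0)
    (h : ⟪a, u⟫ = 0) : u = (ω a u / ‖a‖ ^ 2) • J a := by
  refine ext_inner_right ℝ fun v => ?_
  have := o.inner_mul_inner_add_areaForm_mul_areaForm a u v
  rw [h, zero_mul, zero_add] at this
  rw [real_inner_smul_left, o.inner_rightAngleRotation_left, div_mul_eq_mul_div, this]
  field_simp [norm_ne_zero_iff.2 ha]

theorem Orientation.mem_perpBisector_iff_exists {x y M : V} (hxy : x ≠ y) :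
    M ∈ perpBisector x y ↔ ∃ s : ℝ, M = midpoint ℝ x y + s • J (y - x) := by
  rw [mem_perpBisector_iff_inner_eq_zero', vsub_eq_sub, vsub_eq_sub]
  constructor
  · intro h
    exact ⟨_, eq_add_of_sub_eq'
      (o.eq_smul_rightAngleRotation_of_inner_eq_zero (sub_ne_zero.2 hxy.symm) h)⟩
  · rintro ⟨s, rfl⟩
    rw [add_sub_cancel_left, real_inner_smul_right, o.inner_rightAngleRotation_right,
      o.areaForm_apply_self, neg_zero, mul_zero]

theorem Orientation.dist_midpoint_add_smul_rightAngleRotation_sq (x y : V) (s : ℝ) :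
    dist (midpoint ℝ x y + s • J (y - x)) x ^ 2 = (s ^ 2 + 1 / 4) * dist x y ^ 2 := by
  have : midpoint ℝ x y + s • J (y - x) - x = s • J (y - x) + (2⁻¹ : ℝ) • (y - x) := by
    rw [midpoint_eq_smul_add, invOf_eq_inv]; module
  rw [dist_eq_norm, this, norm_add_sq_real, real_inner_smul_left, real_inner_smul_right,
    o.inner_rightAngleRotation_self, norm_smul, norm_smul, LinearIsometryEquiv.norm_map,
    dist_comm, dist_eq_norm, Real.norm_eq_abs, Real.norm_eq_abs, mul_pow, mul_pow, sq_abs, sq_abs]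
  ring

theorem Orientation.inner_sub_midpoint_rightAngleRotation (x y z : V) :
    ⟪z - midpoint ℝ x y, J (y - x)⟫ = ω (x - z) (y - z) := by
  have h₁ : z - midpoint ℝ x y = -(2⁻¹ : ℝ) • ((x - z) + (y - z)) := by
    rw [midpoint_eq_smul_add, invOf_eq_inv]; module
  have h₂ : y - x = (y - z) - (x - z) := by abel
  rw [h₁, h₂, real_inner_smul_left, o.inner_rightAngleRotation_right]
  generalize x - z = v
  generalize y - z = w
  simp only [map_add, map_sub, LinearMap.add_apply, o.areaForm_apply_self]
  rw [o.areaForm_swap w v]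
  ring

theorem Orientation.abs_areaForm_eq_sin_angle_mul (v w : V) :
    |ω v w| = sin (InnerProductGeometry.angle v w) * (‖v‖ * ‖w‖) := by
  rw [sin_angle_mul_norm_mul_norm, real_inner_self_eq_norm_sq, real_inner_self_eq_norm_sq,
    ← o.inner_sq_add_areaForm_sq v w, ← sq, add_sub_cancel_left, sqrt_sq_eq_abs]

theorem Orientation.inner_le_sqrt_mul_abs_areaForm_iff {v w : V} {β : ℝ} (hβ : 1 ≤ β)
    (hv : v ≠ 0) (hw : w ≠ 0) :
    ⟪v, w⟫ ≤ √(β ^ 2 - 1) * |ω v w| ↔ arcsin (1 / β) ≤ InnerProductGeometry.angle v w := by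
  rw [← cos_angle_mul_norm_mul_norm, o.abs_areaForm_eq_sin_angle_mul, ← mul_assoc √(β ^ 2 - 1),
    mul_le_mul_iff_left₀ (by positivity)]
  exact cos_le_sqrt_sq_sub_one_mul_sin_iff hβ (angle_nonneg v w) (angle_le_pi v w)

end TwoDim

theorem mem_Cbeta_iff (o : Orientation ℝ (EuclideanSpace ℝ (Fin 2)) (Fin 2)) {β : ℝ} (hβ : 1 ≤ β)
    {x y : EuclideanSpace ℝ (Fin 2)} (hxy : x ≠ y) (z : EuclideanSpace ℝ (Fin 2)) :
    z ∈ Cbeta β x y ↔ ⟪x - z, y - z⟫ ≤ √(β ^ 2 - 1) * |o.areaForm (x - z) (y - z)| := by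
  set R := β * dist x y / 2
  set center := fun s : ℝ => midpoint ℝ x y + s • o.rightAngleRotation (y - x)
  have hd : 0 < dist x y := dist_pos.2 hxy
  have hR : 0 ≤ R := by positivity
  have hdist_x : ∀ s, dist (center s) x = R ↔ (2 * s) ^ 2 = √(β ^ 2 - 1) ^ 2 := by
    intro s
    have : (s ^ 2 + 1 / 4) * dist x y ^ 2 - R ^ 2 =
        ((2 * s) ^ 2 - (β ^ 2 - 1)) * (dist x y ^ 2 / 4) := by ring
    rw [← pow_left_inj₀ dist_nonneg hR two_ne_zero,
      o.dist_midpoint_add_smul_rightAngleRotation_sq, sq_sqrt (by nlinarith), ← sub_eq_zero,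
      this, mul_eq_zero, or_iff_left (by positivity), sub_eq_zero]
  have hdist_y : ∀ s, dist (center s) y = dist (center s) x := fun s =>
    (mem_perpBisector_iff_dist_eq.1 ((o.mem_perpBisector_iff_exists hxy).2 ⟨s, rfl⟩)).symm
  have hdist_z : ∀ s, dist (center s) x = R →
      (dist z (center s) ≤ R ↔ ⟪x - z, y - z⟫ ≤ 2 * s * o.areaForm (x - z) (y - z)) := by
    intro s hs
    have := dist_sq_sub_average_dist_sq x y z (center s)
    rw [hdist_y, hs, add_sub_cancel_left, real_inner_smul_right,
      o.inner_sub_midpoint_rightAngleRotation] at this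
    rw [← sq_le_sq₀ dist_nonneg hR]
    constructor <;> intro h <;> linarith
  calc z ∈ Cbeta β x y ↔ ∃ s, (2 * s) ^ 2 = √(β ^ 2 - 1) ^ 2 ∧
        ⟪x - z, y - z⟫ ≤ 2 * s * o.areaForm (x - z) (y - z) := by
        constructor
        · rintro ⟨M, hMx, hMy, hzM⟩
          obtain ⟨s, rfl⟩ := (o.mem_perpBisector_iff_exists hxy).1
            (mem_perpBisector_iff_dist_eq.2 (hMx.trans hMy.symm))
          exact ⟨s, (hdist_x s).1 hMx, (hdist_z s hMx).1 hzM⟩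
        · rintro ⟨s, hs, hc⟩
          have hsx := (hdist_x s).2 hs
          exact ⟨center s, hsx, (hdist_y s).trans hsx, (hdist_z s hsx).2 hc⟩
    _ ↔ ∃ t, t ^ 2 = √(β ^ 2 - 1) ^ 2 ∧ ⟪x - z, y - z⟫ ≤ t * o.areaForm (x - z) (y - z) :=
        ((mul_left_surjective₀ (two_ne_zero' ℝ)).exists (p := fun t =>
          t ^ 2 = √(β ^ 2 - 1) ^ 2 ∧ ⟪x - z, y - z⟫ ≤ t * o.areaForm (x - z) (y - z))).symm
    _ ↔ _ := exists_sq_eq_and_le_mul_iff (sqrt_nonneg _)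

theorem stmt4 (β : ℝ) (hβ : 1 < β) (x y z : EuclideanSpace ℝ (Fin 2))
    (hxy : x ≠ y) (hzx : z ≠ x) (hzy : z ≠ y) :
    z ∈ Cbeta β x y ↔ Real.arcsin (1 / β) ≤ EuclideanGeometry.angle x z y := by
  let o : Orientation ℝ (EuclideanSpace ℝ (Fin 2)) (Fin 2) :=
    (EuclideanSpace.basisFun (Fin 2) ℝ).toBasis.orientation
  rw [mem_Cbeta_iff o hβ.le hxy, EuclideanGeometry.angle, vsub_eq_sub, vsub_eq_sub]
  exact o.inner_le_sqrt_mul_abs_areaForm_iff hβ.le (sub_ne_zero.2 hzx.symm) (sub_ne_zero.2 hzy.symm)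
end

section
/- Let d ≥ 1. There exists α₀ > d, depending only on d, such that for every δ ∈ (0,1) there exists ε > 0, depending only on δ and d, with the following property: for every α ≥ α₀ and every pair (φ,ψ) ∈ B_α satisfying max_{x∈φ} D(x,ψ)^α < 1 − δ, the Lebesgue measure of ⋃_{x∈φ} B_{D(x,ψ)}(x) is at least (1+ε)·κ_d. -/
open Metric Set MeasureTheory ENNReal

noncomputable def nnDist (d : ℕ) (ψ : Finset (EuclideanSpace ℝ (Fin d)))
    (x : EuclideanSpace ℝ (Fin d)) : ℝ :=
  Metric.infDist x ((↑ψ : Set (EuclideanSpace ℝ (Fin d))) \ {x})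

def Generic (d : ℕ) (ψ : Finset (EuclideanSpace ℝ (Fin d))) : Prop :=
  ∀ w ∈ ψ, ∀ x ∈ ψ, ∀ y ∈ ψ, ∀ z ∈ ψ,
    dist w x = dist y z → 0 < dist w x → ({w, x} : Set (EuclideanSpace ℝ (Fin d))) = {y, z}

noncomputable def memB (d : ℕ) (α : ℝ) (φ ψ : Finset (EuclideanSpace ℝ (Fin d))) : Prop :=
  φ ⊆ ψ ∧ 2 ≤ ψ.card ∧ Generic d ψ ∧ 1 ≤ ∑ x ∈ φ, nnDist d ψ x ^ α

/-!
Write `r x` for the nearest-neighbour distance. Since `r x ≤ dist x y` for `y ≠ x`, the ball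
`closedBall x₁ (r x₁)` misses the half of any other ball `ball x ρ`, `ρ ≤ r x`, facing away from
`x₁`, and that half carries half of its volume. For `α ≥ d (7 (d + 2) + 1)`, a point with
`r ^ d ≤ 9/10` has `2 ^ (d + 2) r ^ α ≤ r ^ d`. If two points have `r ^ d ≥ 9/10`, one ball and the
far half of the other already give volume `≥ (1 + 1/4) κ_d`. Otherwise all points but one, `x₁`,
are small; the far halves of the balls `ball x (r x / 2)`, `x ≠ x₁`, are pairwise disjoint and
disjoint from the ball at `x₁`, with total volume
`≥ 2 ∑_{x ≠ x₁} r x ^ α κ_d ≥ 2 (1 - r x₁ ^ α) κ_d`,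
so the union has volume `≥ (2 - r x₁ ^ α) κ_d > (1 + δ) κ_d`.
-/

open scoped RealInnerProductSpace

open Module (finrank)

section HalfBall

variable {E : Type*} [NormedAddCommGroup E] [InnerProductSpace ℝ E]

def halfBall (c : E) (r : ℝ) (v : E) : Set E :=
  ball c r ∩ {z | 0 < ⟪z - c, v⟫}

lemma halfBall_subset_ball (c : E) (r : ℝ) (v : E) : halfBall c r v ⊆ ball c r :=
  inter_subset_left

lemma isOpen_halfBall (c : E) (r : ℝ) (v : E) : IsOpen (halfBall c r v) :=
  isOpen_ball.inter (isOpen_lt continuous_const (by fun_prop))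

lemma halfBall_neg (c : E) (r : ℝ) (v : E) :
    halfBall c r (-v) = AffineMap.homothety c (-1 : ℝ) '' halfBall c r v := by
  have hinv : Function.Involutive (AffineMap.homothety c (-1 : ℝ)) := fun z => by
    simp [AffineMap.homothety_apply]
  rw [image_eq_preimage_of_inverse hinv.leftInverse hinv.rightInverse]
  ext z
  simp [halfBall, AffineMap.homothety_apply, inner_neg_right, dist_eq_norm, -neg_sub]

lemma disjoint_closedBall_halfBall {a c : E} {r : ℝ} (h : r ≤ dist a c) (ρ : ℝ) :
    Disjoint (closedBall a r) (halfBall c ρ (c - a)) := by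
  refine disjoint_left.2 fun z hza ⟨_, hz⟩ => ?_
  have hsq : ‖c - a‖ ^ 2 < ‖z - a‖ ^ 2 := by
    have := norm_add_sq_real (z - c) (c - a)
    rw [sub_add_sub_cancel] at this
    nlinarith [sq_nonneg ‖z - c‖, hz.out]
  have hlt : ‖c - a‖ < ‖z - a‖ := lt_of_pow_lt_pow_left₀ 2 (norm_nonneg _) hsq
  rw [mem_closedBall, dist_eq_norm] at hza
  rw [dist_comm, dist_eq_norm] at h
  linarith

variable [FiniteDimensional ℝ E] [MeasurableSpace E] [BorelSpace E]
  (μ : Measure E) [μ.IsAddHaarMeasure]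

lemma measure_inner_sub_eq_zero {v : E} (hv : v ≠ 0) (c : E) :
    μ {z | ⟪z - c, v⟫ = 0} = 0 := by
  have hker : LinearMap.ker (innerₛₗ ℝ v) ≠ ⊤ := fun h =>
    hv (inner_self_eq_zero.1 (LinearMap.mem_ker.1 (h ▸ Submodule.mem_top : v ∈ _)))
  have hset : {z | ⟪z - c, v⟫ = 0} = (· + -c) ⁻¹' (LinearMap.ker (innerₛₗ ℝ v) : Set E) := by
    ext z
    simp [real_inner_comm, sub_eq_add_neg]
  rw [hset, measure_preimage_add_right, Measure.addHaar_submodule μ _ hker]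

lemma measure_ball_le_two_mul_measure_halfBall {v : E} (hv : v ≠ 0) (c : E) (r : ℝ) :
    μ (ball c r) ≤ 2 * μ (halfBall c r v) := by
  have hcover : ball c r ⊆ halfBall c r v ∪ halfBall c r (-v) ∪ {z | ⟪z - c, v⟫ = 0} := by
    intro z hz
    rcases lt_trichotomy ⟪z - c, v⟫ 0 with h | h | h
    · exact Or.inl (Or.inr ⟨hz, by simpa [inner_neg_right] using h⟩)
    · exact Or.inr h
    · exact Or.inl (Or.inl ⟨hz, h⟩)
  have hneg : μ (halfBall c r (-v)) = μ (halfBall c r v) := by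
    simp [halfBall_neg]
  calc μ (ball c r) ≤ μ (halfBall c r v) + μ (halfBall c r (-v)) + μ {z | ⟪z - c, v⟫ = 0} :=
        (measure_mono hcover).trans <| (measure_union_le _ _).trans <|
          add_le_add_left (measure_union_le _ _) _
    _ = 2 * μ (halfBall c r v) := by rw [hneg, measure_inner_sub_eq_zero μ hv, add_zero, two_mul]

end HalfBall

section Union

variable {E : Type*} [NormedAddCommGroup E] [InnerProductSpace ℝ E] [FiniteDimensional ℝ E]
  [MeasurableSpace E] [BorelSpace E] (μ : Measure E) [μ.IsAddHaarMeasure]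
  {φ s : Finset E} {r ρ : E → ℝ} {x₁ : E}

lemma two_mul_measure_closedBall_add_sum_le
    (hsep : ∀ x ∈ φ, ∀ y ∈ φ, x ≠ y → r x ≤ dist x y) (hx₁ : x₁ ∈ φ) (hs : s ⊆ φ) (hx₁s : x₁ ∉ s)
    (hρ : ∀ x ∈ s, ρ x ≤ r x) (hdisj : (s : Set E).PairwiseDisjoint fun x => ball x (ρ x)) :
    2 * μ (closedBall x₁ (r x₁)) + ∑ x ∈ s, μ (ball x (ρ x)) ≤
      2 * μ (⋃ x ∈ φ, closedBall x (r x)) := by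
  set H := fun x => halfBall x (ρ x) (x - x₁)
  have hmem : ∀ x ∈ s, x ≠ x₁ ∧ x ∈ φ := fun x hx => ⟨ne_of_mem_of_not_mem hx hx₁s, hs hx⟩
  have hHmeas : ∀ x, MeasurableSet (H x) := fun x => (isOpen_halfBall _ _ _).measurableSet
  have hHdisj : (s : Set E).PairwiseDisjoint H :=
    hdisj.mono fun x => halfBall_subset_ball _ _ _
  have hdisj₁ : Disjoint (closedBall x₁ (r x₁)) (⋃ x ∈ s, H x) :=
    disjoint_iUnion₂_right.2 fun x hx =>
      disjoint_closedBall_halfBall (hsep x₁ hx₁ x (hmem x hx).2 (hmem x hx).1.symm) _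
  have hsub : closedBall x₁ (r x₁) ∪ ⋃ x ∈ s, H x ⊆ ⋃ x ∈ φ, closedBall x (r x) :=
    union_subset (subset_biUnion_of_mem (u := fun x => closedBall x (r x)) hx₁) <|
      iUnion₂_subset fun x hx => (halfBall_subset_ball _ _ _).trans <|
        ball_subset_closedBall.trans <| (closedBall_subset_closedBall (hρ x hx)).trans <|
          subset_biUnion_of_mem (u := fun x => closedBall x (r x)) (hmem x hx).2
  calc 2 * μ (closedBall x₁ (r x₁)) + ∑ x ∈ s, μ (ball x (ρ x))
      ≤ 2 * μ (closedBall x₁ (r x₁)) + ∑ x ∈ s, 2 * μ (H x) := by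
        gcongr with x hx
        exact measure_ball_le_two_mul_measure_halfBall μ (sub_ne_zero.2 (hmem x hx).1) _ _
    _ = 2 * μ (closedBall x₁ (r x₁) ∪ ⋃ x ∈ s, H x) := by
        rw [measure_union hdisj₁ (s.measurableSet_biUnion fun x _ => hHmeas x),
          measure_biUnion_finset hHdisj fun x _ => hHmeas x,
          ← Finset.mul_sum, mul_add]
    _ ≤ 2 * μ (⋃ x ∈ φ, closedBall x (r x)) := by gcongr

lemma ofReal_one_add_mul_le_measure_iUnion [Nontrivial E] {ε : ℝ}
    (hsep : ∀ x ∈ φ, ∀ y ∈ φ, x ≠ y → r x ≤ dist x y) (hx₁ : x₁ ∈ φ) (hs : s ⊆ φ) (hx₁s : x₁ ∉ s)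
    (hr₁ : 0 ≤ r x₁) (hρ₀ : ∀ x ∈ s, 0 ≤ ρ x) (hρ : ∀ x ∈ s, ρ x ≤ r x)
    (hdisj : (s : Set E).PairwiseDisjoint fun x => ball x (ρ x))
    (hε : 2 * (1 + ε) ≤ 2 * r x₁ ^ finrank ℝ E + ∑ x ∈ s, ρ x ^ finrank ℝ E) :
    ENNReal.ofReal (1 + ε) * μ (closedBall 0 1) ≤ μ (⋃ x ∈ φ, closedBall x (r x)) := by
  set n := finrank ℝ E
  set κ := μ (closedBall 0 1)
  have hρn : ∀ x ∈ s, 0 ≤ ρ x ^ n := fun x hx => pow_nonneg (hρ₀ x hx) n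
  have hvol : ∀ x ∈ s, μ (ball x (ρ x)) = ENNReal.ofReal (ρ x ^ n) * κ := fun x hx => by
    rw [← Measure.addHaar_closedBall_eq_addHaar_ball, Measure.addHaar_closedBall' μ _ (hρ₀ x hx)]
  refine (ENNReal.mul_le_mul_iff_right two_ne_zero ofNat_ne_top).1 ?_
  calc 2 * (ENNReal.ofReal (1 + ε) * κ) = ENNReal.ofReal (2 * (1 + ε)) * κ := by
        rw [ENNReal.ofReal_mul zero_le_two, ofReal_ofNat, mul_assoc]
    _ ≤ ENNReal.ofReal (2 * r x₁ ^ n + ∑ x ∈ s, ρ x ^ n) * κ := by gcongr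
    _ = 2 * μ (closedBall x₁ (r x₁)) + ∑ x ∈ s, μ (ball x (ρ x)) := by
        rw [ENNReal.ofReal_add (by positivity) (Finset.sum_nonneg hρn), ENNReal.ofReal_mul zero_le_two,
          ENNReal.ofReal_sum_of_nonneg hρn, add_mul, Finset.sum_mul, Finset.sum_congr rfl hvol,
          Measure.addHaar_closedBall' μ _ hr₁, ofReal_ofNat, mul_assoc]
    _ ≤ 2 * μ (⋃ x ∈ φ, closedBall x (r x)) :=
        two_mul_measure_closedBall_add_sum_le μ hsep hx₁ hs hx₁s hρ hdisj

end Union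

lemma Real.rpow_eq_pow_rpow_div {r : ℝ} (hr : 0 ≤ r) {n : ℕ} (hn : n ≠ 0) (α : ℝ) :
    r ^ α = (r ^ n) ^ (α / n) := by
  rw [← Real.rpow_natCast, ← Real.rpow_mul hr, mul_div_cancel₀ _ (Nat.cast_ne_zero.2 hn)]

lemma two_pow_mul_rpow_le_self {s p : ℝ} (k : ℕ) (hs₀ : 0 ≤ s) (hs : s ≤ 9 / 10)
    (hp : 7 * k + 1 ≤ p) : 2 ^ k * s ^ p ≤ s := by
  have hk : (0 : ℝ) ≤ k := k.cast_nonneg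
  -- the factor 7 comes from `(9/10) ^ 7 < 1/2`
  have hsp : s ^ (p - 1) ≤ (1 / 2) ^ k :=
    calc s ^ (p - 1) ≤ (9 / 10) ^ (p - 1) := Real.rpow_le_rpow hs₀ hs (by linarith)
      _ ≤ (9 / 10) ^ ((7 * k : ℕ) : ℝ) :=
          Real.rpow_le_rpow_of_exponent_ge (by norm_num) (by norm_num) (by push_cast; linarith)
      _ = ((9 / 10) ^ 7) ^ k := by rw [Real.rpow_natCast, pow_mul]
      _ ≤ (1 / 2) ^ k := pow_le_pow_left₀ (by norm_num) (by norm_num) k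
  calc 2 ^ k * s ^ p = 2 ^ k * s ^ (p - 1) * s := by
        rw [mul_assoc, ← Real.rpow_add_one' hs₀ (by linarith), sub_add_cancel]
    _ ≤ 2 ^ k * (1 / 2) ^ k * s := by gcongr
    _ = s := by rw [← mul_pow]; norm_num

lemma Finset.exists_mem_forall_imp_eq {α : Type*} {s : Finset α} {P : α → Prop} (hs : s.Nonempty)
    (h : ∀ x ∈ s, ∀ y ∈ s, P x → P y → x = y) : ∃ x₁ ∈ s, ∀ x ∈ s, P x → x = x₁ := by
  by_cases hP : ∃ x₁ ∈ s, P x₁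
  · obtain ⟨x₁, hx₁, hP₁⟩ := hP
    exact ⟨x₁, hx₁, fun x hx hPx => h x hx x₁ hx₁ hPx hP₁⟩
  · obtain ⟨x₁, hx₁⟩ := hs
    exact ⟨x₁, hx₁, fun x hx hPx => (hP ⟨x, hx, hPx⟩).elim⟩

section Packing

variable {E : Type*} [NormedAddCommGroup E] [InnerProductSpace ℝ E] [FiniteDimensional ℝ E]
  [Nontrivial E] [MeasurableSpace E] [BorelSpace E] (μ : Measure E) [μ.IsAddHaarMeasure]
  {φ : Finset E} {r : E → ℝ} {x₁ : E} {ε : ℝ}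

lemma ofReal_one_add_mul_le_of_two_large {x₂ : E} (hε : ε ≤ 1 / 4) (hr : ∀ x, 0 ≤ r x)
    (hsep : ∀ x ∈ φ, ∀ y ∈ φ, x ≠ y → r x ≤ dist x y) (hx₁ : x₁ ∈ φ) (hx₂ : x₂ ∈ φ)
    (hne : x₁ ≠ x₂) (h₁ : 9 / 10 ≤ r x₁ ^ finrank ℝ E) (h₂ : 9 / 10 ≤ r x₂ ^ finrank ℝ E) :
    ENNReal.ofReal (1 + ε) * μ (closedBall 0 1) ≤ μ (⋃ x ∈ φ, closedBall x (r x)) :=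
  ofReal_one_add_mul_le_measure_iUnion μ (s := {x₂}) hsep hx₁ (by simpa) (by simpa using hne)
    (hr x₁) (fun x _ => hr x) (fun _ _ => le_rfl) (by simp)
    (by simp only [Finset.sum_singleton]; linarith)

lemma ofReal_one_add_mul_le_of_forall_ne_small {α δ : ℝ} (hε : ε ≤ δ) (hr : ∀ x, 0 ≤ r x)
    (hsep : ∀ x ∈ φ, ∀ y ∈ φ, x ≠ y → r x ≤ dist x y) (hx₁ : x₁ ∈ φ)
    (hsmall : ∀ x ∈ φ, x ≠ x₁ → 4 * r x ^ α ≤ (r x / 2) ^ finrank ℝ E)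
    (hsum : 1 ≤ ∑ x ∈ φ, r x ^ α) (h₁ : r x₁ ^ α ≤ r x₁ ^ finrank ℝ E) (hmax₁ : r x₁ ^ α < 1 - δ) :
    ENNReal.ofReal (1 + ε) * μ (closedBall 0 1) ≤ μ (⋃ x ∈ φ, closedBall x (r x)) := by
  classical
  have hdisj : ((φ.erase x₁ : Finset E) : Set E).PairwiseDisjoint fun x => ball x (r x / 2) :=
    fun x hx y hy hne => ball_disjoint_ball <| by
      have hxy := hsep x (Finset.mem_of_mem_erase hx) y (Finset.mem_of_mem_erase hy) hne
      have hyx := hsep y (Finset.mem_of_mem_erase hy) x (Finset.mem_of_mem_erase hx) hne.symm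
      rw [dist_comm] at hyx
      linarith
  refine ofReal_one_add_mul_le_measure_iUnion μ hsep hx₁ (Finset.erase_subset _ _)
    (Finset.notMem_erase _ _) (hr x₁) (fun x _ => div_nonneg (hr x) zero_le_two)
    (fun x _ => half_le_self (hr x))
    hdisj ?_
  have hrest : 4 * ∑ x ∈ φ.erase x₁, r x ^ α ≤ ∑ x ∈ φ.erase x₁, (r x / 2) ^ finrank ℝ E := by
    rw [Finset.mul_sum]
    exact Finset.sum_le_sum fun x hx =>
      hsmall x (Finset.mem_of_mem_erase hx) (Finset.ne_of_mem_erase hx)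
  have hsplit := Finset.add_sum_erase φ (fun x => r x ^ α) hx₁
  linarith

theorem ofReal_one_add_mul_le_measure_iUnion_closedBall {α δ : ℝ}
    (hα : finrank ℝ E * (7 * (finrank ℝ E + 2) + 1) ≤ α) (hδ : 0 ≤ δ) (hε : ε ≤ 1 / 4)
    (hεδ : ε ≤ δ) (hr : ∀ x, 0 ≤ r x) (hsep : ∀ x ∈ φ, ∀ y ∈ φ, x ≠ y → r x ≤ dist x y)
    (hsum : 1 ≤ ∑ x ∈ φ, r x ^ α) (hmax : ∀ x ∈ φ, r x ^ α < 1 - δ) :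
    ENNReal.ofReal (1 + ε) * μ (closedBall 0 1) ≤ μ (⋃ x ∈ φ, closedBall x (r x)) := by
  set n := finrank ℝ E
  have hn : 0 < n := Module.finrank_pos
  have hp : 7 * ((n + 2 : ℕ) : ℝ) + 1 ≤ α / n := by
    rw [le_div_iff₀ (by positivity)]
    push_cast
    linarith
  have hpow : ∀ x, r x ^ α = (r x ^ n) ^ (α / n) := fun x =>
    Real.rpow_eq_pow_rpow_div (hr x) hn.ne' α
  have hle : ∀ x ∈ φ, r x ^ α ≤ r x ^ n := fun x hx => by
    have hlt : (r x ^ n) ^ (α / n) < 1 := by linarith [hpow x, hmax x hx]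
    have hn1 : r x ^ n ≤ 1 := not_lt.1 fun h => hlt.not_ge (Real.one_le_rpow h.le (by linarith))
    rw [hpow x]
    exact Real.rpow_le_self_of_le_one (pow_nonneg (hr x) n) hn1 (by linarith)
  by_cases hlarge : ∀ x ∈ φ, ∀ y ∈ φ, 9 / 10 ≤ r x ^ n → 9 / 10 ≤ r y ^ n → x = y
  · have hφ : φ.Nonempty := Finset.nonempty_of_sum_ne_zero (f := fun x => r x ^ α) (by linarith)
    obtain ⟨x₁, hx₁, hsmall⟩ := Finset.exists_mem_forall_imp_eq hφ hlarge
    refine ofReal_one_add_mul_le_of_forall_ne_small μ hεδ hr hsep hx₁ (fun x hx hne => ?_) hsum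
      (hle x₁ hx₁) (hmax x₁ hx₁)
    have hx : 2 ^ (n + 2) * r x ^ α ≤ r x ^ n := by
      rw [hpow x]
      exact two_pow_mul_rpow_le_self _ (pow_nonneg (hr x) n)
        (not_le.1 fun h => hne (hsmall x hx h)).le hp
    calc 4 * r x ^ α = 2 ^ (n + 2) * r x ^ α / 2 ^ n := by field_simp; ring
      _ ≤ r x ^ n / 2 ^ n := by gcongr
      _ = (r x / 2) ^ n := (div_pow _ _ _).symm
  · push Not at hlarge
    obtain ⟨x₁, hx₁, x₂, hx₂, h₁, h₂, hne⟩ := hlarge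
    exact ofReal_one_add_mul_le_of_two_large μ hε hr hsep hx₁ hx₂ hne h₁ h₂

end Packing

lemma nnDist_le_dist {d : ℕ} {ψ : Finset (EuclideanSpace ℝ (Fin d))}
    {x y : EuclideanSpace ℝ (Fin d)} (hy : y ∈ ψ) (hne : x ≠ y) : nnDist d ψ x ≤ dist x y :=
  infDist_le_dist_of_mem ⟨hy, hne.symm⟩

theorem stmt13 (d : ℕ) (hd : 0 < d) :
    ∃ α₀ : ℝ, (d : ℝ) < α₀ ∧
      ∀ δ : ℝ, 0 < δ → δ < 1 → ∃ ε : ℝ, 0 < ε ∧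
        ∀ α : ℝ, α₀ ≤ α →
          ∀ φ ψ : Finset (EuclideanSpace ℝ (Fin d)), memB d α φ ψ →
            (∀ x ∈ φ, nnDist d ψ x ^ α < 1 - δ) →
            ENNReal.ofReal (1 + ε) * volume (closedBall (0 : EuclideanSpace ℝ (Fin d)) 1) ≤
              volume (⋃ x ∈ φ, closedBall x (nnDist d ψ x)) := by
  have hd' : (1 : ℝ) ≤ d := by exact_mod_cast hd
  refine ⟨d * (7 * (d + 2) + 1), by nlinarith, fun δ hδ₀ hδ₁ => ⟨δ / 4, by positivity, ?_⟩⟩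
  rintro α hα φ ψ ⟨hφψ, -, -, hsum⟩ hmax
  have : Nonempty (Fin d) := ⟨⟨0, hd⟩⟩
  exact ofReal_one_add_mul_le_measure_iUnion_closedBall volume
    (by rwa [finrank_euclideanSpace_fin]) hδ₀.le (by linarith) (by linarith)
    (fun _ => infDist_nonneg) (fun x _ y hy hne => nnDist_le_dist (hφψ hy) hne) hsum hmax
end
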